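/- arXiv:0709.0287 — 2 statements merged into one kernel-verified Lean document; each statement's English description precedes it below -/
import Mathlib

section
/- Let F be the free group on generators x_1, …, x_{2n} with n ≥ 1, let K be the commutator subgroup of F, and let h = [x_1, x_2]·[x_3, x_4]⋯[x_{2n-1}, x_{2n}]. Then h lies in K and the image of h in the abelianization H_1(K) = K/[K,K] is nontrivial. -/
/-! Send `x_{2i-1} ↦ X = ⟨1, 0, 0⟩` and `x_{2i} ↦ Y = ⟨0, 1, 0⟩` in the integer Heisenberg group.
Its commutator subgroup is central, hence abelian, so the restriction of this map to `K` factors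
through `H_1(K)`. Each `[x_{2i-1}, x_{2i}]` goes to the central generator `[X, Y] = ⟨0, 0, 1⟩`,
so `h` goes to `⟨0, 0, n⟩ ≠ 1`. -/

open scoped commutatorElement

theorem Abelianization.of_ne_one_of_map_ne_one {F G : Type*} [Group F] [Group G]
    [IsMulCommutative (commutator G)] (f : F →* G) {k : commutator F} (hk : f k ≠ 1) :
    Abelianization.of k ≠ 1 := by
  let _ : CommGroup (commutator G) := { mul_comm := mul_comm' }
  have hmaps : (commutator F).map f ≤ commutator G := by
    rw [map_commutator_eq]
    exact Subgroup.commutator_mono le_top le_top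
  let φ : commutator F →* commutator G := f.restrict fun x hx => hmaps ⟨x, hx, rfl⟩
  intro hk1
  have hφk : φ k = 1 := by simpa using congrArg (Abelianization.lift φ) hk1
  exact hk (congrArg Subtype.val hφk)

/-- The integer Heisenberg group: `⟨a, b, c⟩` is the matrix `[[1, a, c], [0, 1, b], [0, 0, 1]]`. -/
@[ext]
structure Heisenberg where
  a : ℤ
  b : ℤ
  c : ℤ

namespace Heisenberg

instance : Mul Heisenberg := ⟨fun x y => ⟨x.a + y.a, x.b + y.b, x.c + y.c + x.a * y.b⟩⟩
instance : One Heisenberg := ⟨⟨0, 0, 0⟩⟩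
instance : Inv Heisenberg := ⟨fun x => ⟨-x.a, -x.b, -x.c + x.a * x.b⟩⟩

@[simp] lemma mul_a (x y : Heisenberg) : (x * y).a = x.a + y.a := rfl
@[simp] lemma mul_b (x y : Heisenberg) : (x * y).b = x.b + y.b := rfl
@[simp] lemma mul_c (x y : Heisenberg) : (x * y).c = x.c + y.c + x.a * y.b := rfl
@[simp] lemma one_a : (1 : Heisenberg).a = 0 := rfl
@[simp] lemma one_b : (1 : Heisenberg).b = 0 := rfl
@[simp] lemma one_c : (1 : Heisenberg).c = 0 := rfl
@[simp] lemma inv_a (x : Heisenberg) : x⁻¹.a = -x.a := rfl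
@[simp] lemma inv_b (x : Heisenberg) : x⁻¹.b = -x.b := rfl
@[simp] lemma inv_c (x : Heisenberg) : x⁻¹.c = -x.c + x.a * x.b := rfl

instance : Group Heisenberg :=
  Group.ofLeftAxioms (fun x y z => by ext <;> simp only [mul_a, mul_b, mul_c] <;> ring)
    (fun x => by ext <;> simp) (fun x => by ext <;> simp)

lemma commutatorElement_eq (x y : Heisenberg) : ⁅x, y⁆ = ⟨0, 0, x.a * y.b - x.b * y.a⟩ := by
  ext <;> simp [commutatorElement_def]; ring

lemma mk_zero_zero_mem_center (c : ℤ) : (⟨0, 0, c⟩ : Heisenberg) ∈ Subgroup.center Heisenberg :=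
  Subgroup.mem_center_iff.2 fun g => by ext <;> simp [add_comm]

lemma commutator_le_center : commutator Heisenberg ≤ Subgroup.center Heisenberg :=
  Subgroup.commutator_le.2 fun x _ y _ => commutatorElement_eq x y ▸ mk_zero_zero_mem_center _

instance : IsMulCommutative (commutator Heisenberg) :=
  IsMulCommutative.of_setLike_mul_comm fun _ hx y _ =>
    (Subgroup.mem_center_iff.1 (commutator_le_center hx) y).symm

lemma mk_zero_zero_pow (c : ℤ) (m : ℕ) : (⟨0, 0, c⟩ : Heisenberg) ^ m = ⟨0, 0, m * c⟩ := by
  induction m with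
  | zero => ext <;> simp
  | succ m ih => ext <;> simp [pow_succ, ih]; ring

end Heisenberg

/-- Let `F` be the free group on `2n` generators (`n ≥ 1`), indexed by `Fin n × Bool`
(so `x_{2i-1} = of (i, false)` and `x_{2i} = of (i, true)`), let `K` be the commutator
subgroup of `F`, and let `h = [x_1,x_2]·[x_3,x_4]⋯[x_{2n-1},x_{2n}]`.  Then `h` lies in
`K` and its image in the abelianization `H_1(K) = K/[K,K]` is nontrivial. -/
theorem product_of_commutators_nontrivial_in_abelianization_of_commutator_subgroup
    (n : ℕ) (hn : 1 ≤ n)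
    (h : FreeGroup (Fin n × Bool))
    (hh : h = ((List.finRange n).map fun i =>
      ⁅FreeGroup.of (i, false), FreeGroup.of (i, true)⁆).prod) :
    ∃ hmem : h ∈ commutator (FreeGroup (Fin n × Bool)),
      Abelianization.of (⟨h, hmem⟩ : commutator (FreeGroup (Fin n × Bool))) ≠ 1 := by
  have hmem : h ∈ commutator (FreeGroup (Fin n × Bool)) := by
    rw [hh]
    refine list_prod_mem fun x hx => ?_
    obtain ⟨i, -, rfl⟩ := List.mem_map.1 hx
    exact Subgroup.commutator_mem_commutator (Subgroup.mem_top _) (Subgroup.mem_top _)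
  let f : FreeGroup (Fin n × Bool) →* Heisenberg :=
    FreeGroup.lift fun p => if p.2 then ⟨0, 1, 0⟩ else ⟨1, 0, 0⟩
  have hfh : f h = ⟨0, 0, n⟩ := by
    simp [f, hh, map_list_prod, Function.comp_def, Heisenberg.commutatorElement_eq,
      Heisenberg.mk_zero_zero_pow]
  refine ⟨hmem, Abelianization.of_ne_one_of_map_ne_one f fun hf1 => ?_⟩
  have : (n : ℤ) = 0 := by simpa [hfh] using congrArg Heisenberg.c hf1
  omega
end

section
/- Let M be the minimizing multicurve for x ∈ H_1(S,ℤ) at a point X of Teichmüller space (the union of supports of all real minimizing cycles for x). Then there is a unique orientation of the curves of M so that every minimizing cycle for x is a nonnegative linear combination of the oriented curves of M. -/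
/-!
If two minimizing cycles `k`, `k'` for `x` had coefficients of opposite signs on some curve,
then `k + k'` would represent `2x` with length `< |k| + |k'| = 2|x|_ℝ = |2x|_ℝ`, which is
impossible. So all minimizing cycles lie in one closed orthant, which fixes the orientation of
every curve in the support of some minimizing cycle.
-/

open Finset

lemma abs_add_lt_abs_add_abs_of_neg_of_pos {a b : ℝ} (ha : a < 0) (hb : 0 < b) :
    |a + b| < |a| + |b| := by
  refine (abs_add_le a b).lt_of_ne fun h => ?_
  rcases (abs_add_eq_add_abs_iff a b).1 h with ⟨ha', -⟩ | ⟨-, hb'⟩ <;> linarith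

section Cycles

variable {ι V : Type*} [Fintype ι] [AddCommGroup V] [Module ℝ V]

lemma sum_abs_add_mul_lt {ℓ : ι → ℝ} (hℓ : ∀ i, 0 < ℓ i) {k k' : ι → ℝ} {i : ι}
    (hk : k i < 0) (hk' : 0 < k' i) :
    ∑ j, |k j + k' j| * ℓ j < ∑ j, |k j| * ℓ j + ∑ j, |k' j| * ℓ j := by
  rw [← sum_add_distrib]
  refine sum_lt_sum (fun j _ => ?_) ⟨i, mem_univ i, ?_⟩
  · rw [← add_mul]
    exact mul_le_mul_of_nonneg_right (abs_add_le _ _) (hℓ j).le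
  · rw [← add_mul]
    exact mul_lt_mul_of_pos_right (abs_add_lt_abs_add_abs_of_neg_of_pos hk hk') (hℓ i)

lemma sInf_length_le {v : ι → V} {ℓ : ι → ℝ} (hℓ : ∀ i, 0 ≤ ℓ i) {y : V} {k : ι → ℝ}
    (hk : ∑ i, k i • v i = y) :
    sInf {L | ∃ k : ι → ℝ, ∑ i, k i • v i = y ∧ L = ∑ i, |k i| * ℓ i} ≤ ∑ i, |k i| * ℓ i := by
  refine csInf_le ⟨0, ?_⟩ ⟨k, hk, rfl⟩
  rintro L ⟨k, -, rfl⟩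
  exact sum_nonneg fun j _ => mul_nonneg (abs_nonneg _) (hℓ j)

lemma nonpos_of_minimizing_of_neg {v : ι → V} {ℓ : ι → ℝ} (hℓ : ∀ i, 0 < ℓ i) {x : V} {m : ℝ}
    (hdouble : sInf {L | ∃ k : ι → ℝ, ∑ i, k i • v i = (2 : ℝ) • x ∧
      L = ∑ i, |k i| * ℓ i} = 2 * m)
    {k k' : ι → ℝ} (hk : ∑ i, k i • v i = x) (hkm : ∑ i, |k i| * ℓ i = m)
    (hk' : ∑ i, k' i • v i = x) (hk'm : ∑ i, |k' i| * ℓ i = m) {i : ι} (hki : k i < 0) :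
    k' i ≤ 0 := by
  by_contra! hk'i
  have hsum : ∑ j, (k j + k' j) • v j = (2 : ℝ) • x := by
    simp only [add_smul, sum_add_distrib, hk, hk', two_smul]
  have hle := sInf_length_le (fun j => (hℓ j).le) hsum
  have hlt := sum_abs_add_mul_lt hℓ hki hk'i
  linarith

end Cycles

section Orientation

variable {ι : Type*}

lemma eq_of_mul_nonneg_of_sign {ε ε' a : ℝ} (hε : ε = 1 ∨ ε = -1) (hε' : ε' = 1 ∨ ε' = -1)
    (h : 0 ≤ ε * a) (h' : 0 ≤ ε' * a) (ha : a ≠ 0) : ε' = ε := by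
  rcases lt_or_gt_of_ne ha with ha | ha <;>
    rcases hε with rfl | rfl <;> rcases hε' with rfl | rfl <;> linarith

lemma exists_sign_mul_nonneg (P : Set (ι → ℝ))
    (hP : ∀ k ∈ P, ∀ k' ∈ P, ∀ i, k i < 0 → k' i ≤ 0) :
    ∃ ε : ι → ℝ, (∀ i, ε i = 1 ∨ ε i = -1) ∧ ∀ k ∈ P, ∀ i, 0 ≤ ε i * k i := by
  classical
  refine ⟨fun i => if ∃ k ∈ P, k i < 0 then -1 else 1, fun i => by dsimp only; split_ifs <;> simp, ?_⟩
  intro k hk i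
  dsimp only
  split_ifs with h
  · obtain ⟨k', hk', hk'i⟩ := h
    linarith [hP k' hk' k hk i hk'i]
  · linarith [not_lt.1 fun hki => h ⟨k, hk, hki⟩]

end Orientation

theorem minimizing_multicurve_orientation_general {V : Type} [AddCommGroup V] [Module ℝ V]
    (n : ℕ) (v : Fin n → V) (ℓ : Fin n → ℝ) (hℓ : ∀ i, 0 < ℓ i)
    (x : V)
    (m : ℝ)
    (P : Set (Fin n → ℝ))
    (hP : P = {k | (∑ i, k i • v i) = x ∧ (∑ i, |k i| * ℓ i) = m})
    (hdouble : sInf {L | ∃ k : Fin n → ℝ, (∑ i, k i • v i) = (2 : ℝ) • x ∧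
      L = ∑ i, |k i| * ℓ i} = 2 * m) :
    ∃ ε : Fin n → ℝ, (∀ i, ε i = 1 ∨ ε i = -1) ∧
      (∀ k ∈ P, ∀ i, 0 ≤ ε i * k i) ∧
      (∀ ε' : Fin n → ℝ, (∀ i, ε' i = 1 ∨ ε' i = -1) →
        (∀ k ∈ P, ∀ i, 0 ≤ ε' i * k i) →
        ∀ i, (∃ k ∈ P, k i ≠ 0) → ε' i = ε i) := by
  obtain ⟨ε, hε, hεP⟩ := exists_sign_mul_nonneg P fun k hk k' hk' i => by
    rw [hP] at hk hk'
    exact nonpos_of_minimizing_of_neg hℓ hdouble hk.1 hk.2 hk'.1 hk'.2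
  refine ⟨ε, hε, hεP, fun ε' hε' hε'P i ⟨k, hk, hki⟩ => ?_⟩
  exact eq_of_mul_nonneg_of_sign (hε i) (hε' i) (hεP k hk i) (hε'P k hk i) hki

/-- **Orientation of the minimizing multicurve** (abstract form).  The curves of the
minimizing multicurve `M` for `x` at `X ∈ Teich(S)` are modelled by vectors
`v i ∈ H_1(S,ℝ)` with positive lengths `ℓ i`; a real cycle is a coefficient vector `k`
with `Σ k i • v i = x`, of length `L k = Σ |k i| ℓ i`, and the minimizing cycles are
those attaining the infimum `m = |x|_ℝ`.  Assuming `|2x|_ℝ = 2|x|_ℝ`, there is a choice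
of signs (an orientation) `ε i ∈ {1, -1}` of the curves such that every minimizing
cycle is a nonnegative linear combination of the oriented curves, and this orientation
is unique on the curves of `M` (those appearing in the support of some minimizing
cycle). -/
theorem minimizing_multicurve_orientation {V : Type} [AddCommGroup V] [Module ℝ V]
    (n : ℕ) (v : Fin n → V) (ℓ : Fin n → ℝ) (hℓ : ∀ i, 0 < ℓ i)
    (x : V) (hx : x ≠ 0)
    (m : ℝ) (hm : m = sInf {L | ∃ k : Fin n → ℝ, (∑ i, k i • v i) = x ∧
      L = ∑ i, |k i| * ℓ i})
    (P : Set (Fin n → ℝ))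
    (hP : P = {k | (∑ i, k i • v i) = x ∧ (∑ i, |k i| * ℓ i) = m})
    (hPne : P.Nonempty)
    (hdouble : sInf {L | ∃ k : Fin n → ℝ, (∑ i, k i • v i) = (2 : ℝ) • x ∧
      L = ∑ i, |k i| * ℓ i} = 2 * m) :
    ∃ ε : Fin n → ℝ, (∀ i, ε i = 1 ∨ ε i = -1) ∧
      (∀ k ∈ P, ∀ i, 0 ≤ ε i * k i) ∧
      (∀ ε' : Fin n → ℝ, (∀ i, ε' i = 1 ∨ ε' i = -1) →
        (∀ k ∈ P, ∀ i, 0 ≤ ε' i * k i) →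
        ∀ i, (∃ k ∈ P, k i ≠ 0) → ε' i = ε i) :=
  minimizing_multicurve_orientation_general n v ℓ hℓ x m P hP hdouble
end
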